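/- On an N×N periodic square lattice with a gauge field of trivial plaquette holonomy, the two fundamental Wilson loops w₁ and w₂ based at the same vertex, winding once around the two independent cycles of the torus, commute: w₁ w₂ = w₂ w₁. -/

import Mathlib

/-!  Lattice gauge theory on the N×N periodic square lattice (discrete torus),
with vertices `ZMod N × ZMod N`.  A path is a list of steps `(μ, b)`: from `x`,
if `b = true` move to `x + e μ` picking up `U μ x`; if `b = false` move to
`x - e μ` picking up `(U μ (x - e μ))⁻¹`. -/

/-- Endpoint of a path starting at `x`. -/
def pathEnd {Vt : Type*} [AddGroup Vt] (e : Fin 2 → Vt) (x : Vt) :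
    List (Fin 2 × Bool) → Vt
  | [] => x
  | (μ, b) :: γ => pathEnd e (if b then x + e μ else x - e μ) γ

/-- The Wilson line of the gauge field `U` along a path starting at `x`. -/
def wline {G Vt : Type*} [Group G] [AddGroup Vt] (e : Fin 2 → Vt)
    (U : Fin 2 → Vt → G) (x : Vt) : List (Fin 2 × Bool) → G
  | [] => 1
  | (μ, b) :: γ =>
      if b then wline e U (x + e μ) γ * U μ x
      else wline e U (x - e μ) γ * (U μ (x - e μ))⁻¹

/-- The plaquette holonomy (field strength) based at the vertex `x`. -/
def plaq {G Vt : Type*} [Group G] [AddGroup Vt] (e : Fin 2 → Vt)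
    (U : Fin 2 → Vt → G) (x : Vt) : G :=
  (U 1 x)⁻¹ * (U 0 (x + e 1))⁻¹ * U 1 (x + e 0) * U 0 x


/-- Signed winding number of a path in the direction `μ`. -/
def wind (μ : Fin 2) (γ : List (Fin 2 × Bool)) : ℤ :=
  (γ.count (μ, true) : ℤ) - (γ.count (μ, false) : ℤ)


/-! Flatness says that the vertical link `U 1` can be pushed through one horizontal link at the
cost of shifting it by `e 1`; iterating, it passes through a whole horizontal line. Since that line
closes into the loop `w₀` after `N` steps, `U 1 x` intertwines `w₀` based at `x` and at `x + e 1`,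
and iterating this once more along the vertical loop `w₁` gives `w₀ w₁ = w₁ w₀`. -/

theorem plaq_eq_one_iff {G Vt : Type*} [Group G] [AddGroup Vt] (e : Fin 2 → Vt)
    (U : Fin 2 → Vt → G) (x : Vt) :
    plaq e U x = 1 ↔ U 1 (x + e 0) * U 0 x = U 0 (x + e 1) * U 1 x := by
  rw [plaq, mul_assoc _ _ (U 0 x), ← mul_inv_rev, inv_mul_eq_one, eq_comm]

theorem wline_replicate_intertwine {G Vt : Type*} [Group G] [AddCommGroup Vt]
    (e : Fin 2 → Vt) (U : Fin 2 → Vt → G) (μ : Fin 2) (f : Vt → G) (b : Vt)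
    (hf : ∀ x, f (x + e μ) * U μ x = U μ (x + b) * f x) (k : ℕ) (x : Vt) :
    f (x + k • e μ) * wline e U x (List.replicate k (μ, true)) =
      wline e U (x + b) (List.replicate k (μ, true)) * f x := by
  induction k generalizing x with
  | zero => simp [wline]
  | succ k ih =>
    have hx : x + (k + 1) • e μ = x + e μ + k • e μ := by rw [succ_nsmul']; abel
    calc f (x + (k + 1) • e μ) * wline e U x (List.replicate (k + 1) (μ, true))
        = f (x + e μ + k • e μ) * wline e U (x + e μ) (List.replicate k (μ, true)) * U μ x := by
          rw [hx, List.replicate_succ, wline, if_pos rfl, mul_assoc]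
      _ = wline e U (x + e μ + b) (List.replicate k (μ, true)) * (f (x + e μ) * U μ x) := by
          rw [ih, mul_assoc]
      _ = wline e U (x + b) (List.replicate (k + 1) (μ, true)) * f x := by
          rw [hf, List.replicate_succ, wline, if_pos rfl, add_right_comm, mul_assoc]

theorem fundamental_wilson_loops_commute_general {G : Type*} [Group G] {N : ℕ}
    (e : Fin 2 → ZMod N × ZMod N) (he : e = ![(1, 0), (0, 1)])
    (U : Fin 2 → ZMod N × ZMod N → G)
    (hflat : ∀ p : ZMod N × ZMod N, plaq e U p = 1) :
    wline e U 0 (List.replicate N ((0 : Fin 2), true)) *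
        wline e U 0 (List.replicate N ((1 : Fin 2), true)) =
      wline e U 0 (List.replicate N ((1 : Fin 2), true)) *
        wline e U 0 (List.replicate N ((0 : Fin 2), true)) := by
  have hwrap : ∀ μ, N • e μ = 0 := by
    intro μ
    fin_cases μ <;> simp [he]
  have hsquare : ∀ x, U 1 (x + e 0) * U 0 x = U 0 (x + e 1) * U 1 x :=
    fun x => (plaq_eq_one_iff e U x).1 (hflat x)
  set w₀ : ZMod N × ZMod N → G := fun x => wline e U x (List.replicate N (0, true))
  have hvert : ∀ x, w₀ (x + e 1) * U 1 x = U 1 (x + 0) * w₀ x := fun x => by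
    have := wline_replicate_intertwine e U 0 (U 1) (e 1) hsquare N x
    rw [hwrap, add_zero] at this
    rw [add_zero, this]
  simpa [hwrap] using wline_replicate_intertwine e U 1 w₀ 0 hvert N 0

/-- On the N×N periodic lattice with a gauge field of trivial
plaquette holonomy, the two fundamental Wilson loops `w₁` and `w₂`, based at the
same vertex and winding once around the two independent cycles of the torus,
commute. -/
theorem fundamental_wilson_loops_commute {G : Type*} [Group G] {N : ℕ}
    (hN : 0 < N)
    (e : Fin 2 → ZMod N × ZMod N) (he : e = ![(1, 0), (0, 1)])
    (U : Fin 2 → ZMod N × ZMod N → G)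
    (hflat : ∀ p : ZMod N × ZMod N, plaq e U p = 1) :
    wline e U 0 (List.replicate N ((0 : Fin 2), true)) *
        wline e U 0 (List.replicate N ((1 : Fin 2), true)) =
      wline e U 0 (List.replicate N ((1 : Fin 2), true)) *
        wline e U 0 (List.replicate N ((0 : Fin 2), true)) :=
  fundamental_wilson_loops_commute_general e he U hflat
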